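/- Stabilization by pressure: given μ_BGK : [ρ₁,ρ₂] → ℝ continuous with μ_BGK < 0 on [ρ₁,ρ₂] ⊂ (0,1), and U_eq differentiable with U_eq′(ρ) ≤ −c < 0 on [ρ₁,ρ₂], there exists a strictly increasing differentiable pressure p (e.g. p(ρ) = Kρ² for K large enough) such that μ(ρ) = μ_BGK(ρ) − ρ² p′(ρ) U_eq′(ρ) > 0 for all ρ ∈ [ρ₁,ρ₂]. -/

import Mathlib

open Set

/-! With `p(ρ) = Kρ²` the correction term is `−2Kρ³ U_eq′(ρ) ≥ 2Kρ₁³c`, a positive constant that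
grows linearly in `K`, while `μ_BGK` is bounded below on the compact interval; so large `K` wins. -/

theorem stabilization_by_pressure_general
    (μBGK Ueq' : ℝ → ℝ) (ρ₁ ρ₂ c : ℝ)
    (h₁ : 0 < ρ₁)
    (hcont : ContinuousOn μBGK (Icc ρ₁ ρ₂))
    (hc : 0 < c)
    (hU' : ∀ r ∈ Icc ρ₁ ρ₂, Ueq' r ≤ -c) :
    ∃ p p' : ℝ → ℝ,
      (∀ r, HasDerivAt p (p' r) r) ∧
      StrictMonoOn p (Icc (0:ℝ) 1) ∧
      ∀ r ∈ Icc ρ₁ ρ₂, 0 < μBGK r - r ^ 2 * p' r * Ueq' r := by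
  obtain ⟨m, hm⟩ := isCompact_Icc.bddBelow_image hcont
  obtain ⟨K, hK, hKm⟩ := exists_pos_lt_mul (by positivity : 0 < 2 * ρ₁ ^ 3 * c) (-m)
  refine ⟨fun r => K * r ^ 2, fun r => K * (2 * r), fun r => ?_, ?_, fun r hr => ?_⟩
  · simpa using (hasDerivAt_pow 2 r).const_mul K
  · exact fun a ha b _ hab => mul_lt_mul_of_pos_left (pow_lt_pow_left₀ hab ha.1 two_ne_zero) hK
  · have hμ : m ≤ μBGK r := hm (mem_image_of_mem _ hr)
    have hr₀ : 0 < r := h₁.trans_le hr.1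
    calc 0 < μBGK r + K * (2 * ρ₁ ^ 3 * c) := by linarith
      _ ≤ μBGK r + K * (2 * r ^ 3 * c) := by gcongr; exact hr.1
      _ ≤ μBGK r + K * (2 * r ^ 3 * (-Ueq' r)) := by gcongr; linarith [hU' r hr]
      _ = μBGK r - r ^ 2 * (K * (2 * r)) * Ueq' r := by ring

/-- stabilization by pressure.  If `μ_BGK` is continuous and
negative on `[ρ₁,ρ₂] ⊂ (0,1)` and `U_eq' ≤ −c < 0` there, then there is a
strictly increasing differentiable pressure `p` (e.g. `p(ρ) = Kρ²` for `K`
large) with `μ(ρ) = μ_BGK(ρ) − ρ² p'(ρ) U_eq'(ρ) > 0` on `[ρ₁,ρ₂]`. -/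
theorem stabilization_by_pressure
    (μBGK Ueq Ueq' : ℝ → ℝ) (ρ₁ ρ₂ c : ℝ)
    (h₁ : 0 < ρ₁) (h₁₂ : ρ₁ ≤ ρ₂) (h₂ : ρ₂ < 1)
    (hcont : ContinuousOn μBGK (Icc ρ₁ ρ₂))
    (hneg : ∀ r ∈ Icc ρ₁ ρ₂, μBGK r < 0)
    (hc : 0 < c)
    (hUderiv : ∀ r ∈ Icc ρ₁ ρ₂, HasDerivAt Ueq (Ueq' r) r)
    (hU' : ∀ r ∈ Icc ρ₁ ρ₂, Ueq' r ≤ -c) :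
    ∃ p p' : ℝ → ℝ,
      (∀ r, HasDerivAt p (p' r) r) ∧
      StrictMonoOn p (Icc (0:ℝ) 1) ∧
      ∀ r ∈ Icc ρ₁ ρ₂, 0 < μBGK r - r ^ 2 * p' r * Ueq' r :=
  stabilization_by_pressure_general μBGK Ueq' ρ₁ ρ₂ c h₁ hcont hc hU'
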